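/- Let G be a connected semisimple Lie group and K ⊂ H compact Lie subgroups of G. Let M_F and M_C be the tangent spaces at the origin of F = H/K and C = G/H respectively. Then for a, b ∈ ℝ⁺ the metric g_{a,b} = a·B|_{M_F} + b·B|_{M_C} is a g.o. metric on G/K if and only if for every v_F ∈ M_F and every v_C ∈ M_C there exists X ∈ 𝔨 such that [X, v_F] = 0 and [X + v_F, v_C] = 0. -/

import Mathlib

/-!
Write `B` for the Killing form and `x = v_F + v_C`. Since `𝔨 ⊥ 𝔪` and `g_{a,b}` is
`B`-self-adjoint on `𝔪`, the vector `Z + x` with `Z ∈ 𝔨` is geodesic iff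
`[Z + x, a v_F + b v_C] ⊥ 𝔪`, and this bracket expands as
`a [Z, v_F] + [b Z + (b - a) v_F, v_C]`.

If `X` satisfies the criterion, `Z = ((b - a) / b) X` makes the bracket vanish. Conversely, take
`a = 1`, `b = 2`: the first summand lies in `𝔥` and is orthogonal to `𝔨`, the second lies in
`M_C = 𝔥^⊥`, which is `ad 𝔥`-invariant. So the bracket is orthogonal to `𝔨 ⊕ 𝔪 = 𝔤`, hence
zero by nondegeneracy, both summands vanish since `𝔥 ∩ M_C = 0`, and `X = 2 Z` works.
-/

open Module

/-- A nonzero `X ∈ 𝔤` is a *geodesic vector* when the orbit `γ(t) = exp(tX)·o` is a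
geodesic of the homogeneous Riemannian manifold `(G/K, g)`.  Since homogeneous Riemannian
geometry is not available in Mathlib, we encode this notion by its standard algebraic
characterization (Kowalski–Vanhecke): `⟨[X,Y]_𝔪, X_𝔪⟩ = 0` for all `Y ∈ 𝔪`, where
`⟨u, v⟩ = B(Λu, v)`, `B = -Killing form`, `Λ` is the associated operator of `g` and
`p` is the projection of `𝔤` onto `𝔪` along `𝔨`. -/
def IsGeodesicVector {𝔤 : Type*} [LieRing 𝔤] [LieAlgebra ℝ 𝔤]
    (𝔪 : Submodule ℝ 𝔤) (p Λ : 𝔤 →ₗ[ℝ] 𝔤) (X : 𝔤) : Prop :=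
  ∀ Y ∈ 𝔪, -(killingForm ℝ 𝔤 (Λ (p ⁅X, Y⁆)) (p X)) = 0

/-- `(G/K, g)` is a g.o. space: every geodesic through the origin `o = eK` is
homogeneous. -/
def IsGOMetric {𝔤 : Type*} [LieRing 𝔤] [LieAlgebra ℝ 𝔤]
    (𝔨 : LieSubalgebra ℝ 𝔤) (𝔪 : Submodule ℝ 𝔤) (p Λ : 𝔤 →ₗ[ℝ] 𝔤) : Prop :=
  ∀ x ∈ 𝔪, x ≠ (0 : 𝔤) → ∃ a ∈ 𝔨, IsGeodesicVector 𝔪 p Λ (a + x)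

open LinearMap (BilinForm)

namespace Submodule

variable {R M : Type*} [CommRing R] [AddCommGroup M] [Module R M] {U V : Submodule R M}

theorem exists_linearMap_eq_smul_of_isCompl (h : IsCompl U V) (a b : R) :
    ∃ Λ : M →ₗ[R] M, (∀ x ∈ U, Λ x = a • x) ∧ ∀ x ∈ V, Λ x = b • x :=
  ⟨a • U.projection V h + b • V.projection U h.symm,
    fun x hx ↦ by
      simp [projection_apply_of_mem_left h hx, projection_apply_of_mem_right h.symm hx],
    fun x hx ↦ by
      simp [projection_apply_of_mem_right h hx, projection_apply_of_mem_left h.symm hx]⟩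

theorem map_mem_and_sub_map_mem_of_sup_eq_top {p : M →ₗ[R] M} (hUV : U ⊔ V = ⊤)
    (hpU : ∀ x ∈ U, p x = 0) (hpV : ∀ x ∈ V, p x = x) (x : M) : p x ∈ V ∧ x - p x ∈ U := by
  obtain ⟨u, hu, v, hv, rfl⟩ := mem_sup.mp (hUV ▸ mem_top : x ∈ U ⊔ V)
  rw [map_add, hpU u hu, hpV v hv, zero_add, add_sub_cancel_right]
  exact ⟨hv, hu⟩

end Submodule

namespace LinearMap.BilinForm

variable {R M : Type*} [CommRing R] [AddCommGroup M] [Module R M] {B : BilinForm R M}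
  {U V : Submodule R M}

theorem eq_zero_of_sup_eq_top (hB : B.SeparatingLeft) (hUV : U ⊔ V = ⊤) {x : M}
    (hU : ∀ u ∈ U, B x u = 0) (hV : ∀ v ∈ V, B x v = 0) : x = 0 := by
  refine hB x fun y ↦ ?_
  obtain ⟨u, hu, v, hv, rfl⟩ := Submodule.mem_sup.mp (hUV ▸ Submodule.mem_top : y ∈ U ⊔ V)
  rw [map_add, hU u hu, hV v hv, add_zero]

theorem isCompl_of_sup_eq_top (hB : B.SeparatingLeft) (hB' : B.IsRefl) (hUV : U ⊔ V = ⊤)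
    (horth : ∀ u ∈ U, ∀ v ∈ V, B u v = 0) : IsCompl U V := by
  refine ⟨Submodule.disjoint_def.mpr fun x hxU hxV ↦ ?_, codisjoint_iff.mpr hUV⟩
  exact eq_zero_of_sup_eq_top hB hUV (fun u hu ↦ hB' _ _ (horth u hu x hxV)) (horth x hxU)

theorem orthogonal_eq_of_sup_eq_top (hB : B.SeparatingLeft) (hB' : B.IsRefl) (hUV : U ⊔ V = ⊤)
    (horth : ∀ u ∈ U, ∀ v ∈ V, B u v = 0) : B.orthogonal U = V := by
  refine le_antisymm (fun x hx ↦ ?_) fun v hv u hu ↦ horth u hu v hv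
  obtain ⟨u, hu, v, hv, rfl⟩ := Submodule.mem_sup.mp (hUV ▸ Submodule.mem_top : x ∈ U ⊔ V)
  suffices u = 0 by simpa [this] using hv
  refine eq_zero_of_sup_eq_top hB hUV (fun u' hu' ↦ hB' _ _ ?_) (horth u hu)
  have hx' : B u' (u + v) = 0 := hx u' hu'
  rwa [map_add, horth u' hu' v hv, add_zero] at hx'

theorem apply_map_eq_apply_map_of_mem_sup (hB' : B.IsRefl)
    (horth : ∀ u ∈ U, ∀ v ∈ V, B u v = 0) {Λ : M →ₗ[R] M} {a b : R}
    (hΛU : ∀ x ∈ U, Λ x = a • x) (hΛV : ∀ x ∈ V, Λ x = b • x) {x y : M} (hx : x ∈ U ⊔ V)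
    (hy : y ∈ U ⊔ V) : B (Λ x) y = B x (Λ y) := by
  obtain ⟨u, hu, v, hv, rfl⟩ := Submodule.mem_sup.mp hx
  obtain ⟨u', hu', v', hv', rfl⟩ := Submodule.mem_sup.mp hy
  simp only [map_add, hΛU u hu, hΛV v hv, hΛU u' hu', hΛV v' hv', map_smul,
    LinearMap.add_apply, LinearMap.smul_apply, smul_eq_mul, horth u hu v' hv',
    hB' _ _ (horth u' hu' v hv)]
  ring

variable {L : Type*} [LieRing L] [LieAlgebra R L] {Φ : BilinForm R L}

theorem lie_mem_orthogonal (hΦ : Φ.lieInvariant L) {H : LieSubalgebra R L} {h x : L}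
    (hh : h ∈ H) (hx : x ∈ Φ.orthogonal H.toSubmodule) :
    ⁅h, x⁆ ∈ Φ.orthogonal H.toSubmodule := fun y hy ↦ by
  have := hΦ h y x
  rw [hx _ (H.lie_mem hh hy), zero_eq_neg] at this
  exact this

end LinearMap.BilinForm

theorem lie_add_add_smul_add_smul {R L : Type*} [CommRing R] [LieRing L] [LieAlgebra R L]
    (Z u v : L) (a b : R) :
    ⁅Z + (u + v), a • u + b • v⁆ = a • ⁅Z, u⁆ + ⁅b • Z + (b - a) • u, v⁆ := by
  simp only [add_lie, lie_add, sub_lie, lie_smul, smul_lie, lie_self, sub_smul]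
  rw [← lie_skew v u]
  module

open LinearMap.BilinForm

section KillingForm

variable {𝔤 : Type*} [LieRing 𝔤] [LieAlgebra ℝ 𝔤]
  {𝔨 𝔥 : LieSubalgebra ℝ 𝔤} {𝔪 MF MC : Submodule ℝ 𝔤} {p Λ : 𝔤 →ₗ[ℝ] 𝔤}

theorem isGeodesicVector_add_iff (h𝔤 : 𝔨.toSubmodule ⊔ 𝔪 = ⊤)
    (h𝔨𝔪 : ∀ k ∈ 𝔨, ∀ y ∈ 𝔪, killingForm ℝ 𝔤 k y = 0)
    (hp𝔨 : ∀ x ∈ 𝔨, p x = 0) (hp𝔪 : ∀ x ∈ 𝔪, p x = x)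
    (hΛ : ∀ x ∈ 𝔪, ∀ y ∈ 𝔪, killingForm ℝ 𝔤 (Λ x) y = killingForm ℝ 𝔤 x (Λ y))
    {Z x : 𝔤} (hZ : Z ∈ 𝔨) (hx : x ∈ 𝔪) (hΛx : Λ x ∈ 𝔪) :
    IsGeodesicVector 𝔪 p Λ (Z + x) ↔ ∀ Y ∈ 𝔪, killingForm ℝ 𝔤 Y ⁅Z + x, Λ x⁆ = 0 := by
  have hpZx : p (Z + x) = x := by rw [map_add, hp𝔨 Z hZ, hp𝔪 x hx, zero_add]
  refine forall₂_congr fun Y _ ↦ ?_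
  obtain ⟨hpW, hW⟩ := Submodule.map_mem_and_sub_map_mem_of_sup_eq_top h𝔤 hp𝔨 hp𝔪 ⁅Z + x, Y⁆
  have hpW' : killingForm ℝ 𝔤 ⁅Z + x, Y⁆ (Λ x) = killingForm ℝ 𝔤 (p ⁅Z + x, Y⁆) (Λ x) := by
    rw [← sub_eq_zero, ← LinearMap.sub_apply, ← map_sub, h𝔨𝔪 _ hW _ hΛx]
  rw [hpZx, hΛ _ hpW x hx, ← hpW', LieModule.traceForm_apply_lie_apply', neg_neg]

theorem isGeodesicVector_add_add_iff (h𝔨𝔥 : 𝔨 ≤ 𝔥) (hMF𝔥 : MF ≤ 𝔥.toSubmodule)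
    (h𝔤 : 𝔨.toSubmodule ⊔ (MF ⊔ MC) = ⊤)
    (hMForth : ∀ x ∈ 𝔨, ∀ y ∈ MF, killingForm ℝ 𝔤 x y = 0)
    (hMCorth : ∀ x ∈ 𝔥, ∀ y ∈ MC, killingForm ℝ 𝔤 x y = 0)
    (hp𝔨 : ∀ x ∈ 𝔨, p x = 0) (hp𝔪 : ∀ x ∈ MF ⊔ MC, p x = x) {a b : ℝ}
    (hΛF : ∀ x ∈ MF, Λ x = a • x) (hΛC : ∀ x ∈ MC, Λ x = b • x)
    {Z vF vC : 𝔤} (hZ : Z ∈ 𝔨) (hvF : vF ∈ MF) (hvC : vC ∈ MC) :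
    IsGeodesicVector (MF ⊔ MC) p Λ (Z + (vF + vC)) ↔
      ∀ Y ∈ MF ⊔ MC, killingForm ℝ 𝔤 Y (a • ⁅Z, vF⁆ + ⁅b • Z + (b - a) • vF, vC⁆) = 0 := by
  have hrefl : (killingForm ℝ 𝔤).IsRefl := (LieModule.traceForm_isSymm ℝ 𝔤 𝔤).isRefl
  have hΛx : Λ (vF + vC) = a • vF + b • vC := by rw [map_add, hΛF vF hvF, hΛC vC hvC]
  have h𝔨𝔪 : ∀ k ∈ 𝔨, ∀ y ∈ MF ⊔ MC, killingForm ℝ 𝔤 k y = 0 := fun k hk y hy ↦ by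
    obtain ⟨f, hf, c, hc, rfl⟩ := Submodule.mem_sup.mp hy
    rw [map_add, hMForth k hk f hf, hMCorth k (h𝔨𝔥 hk) c hc, add_zero]
  rw [isGeodesicVector_add_iff h𝔤 h𝔨𝔪 hp𝔨 hp𝔪
      (fun x hx y hy ↦ apply_map_eq_apply_map_of_mem_sup hrefl
        (fun f hf ↦ hMCorth f (hMF𝔥 hf)) hΛF hΛC hx hy) hZ
      (add_mem (Submodule.mem_sup_left hvF) (Submodule.mem_sup_right hvC))
      (hΛx ▸ add_mem (Submodule.mem_sup_left (MF.smul_mem a hvF))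
        (Submodule.mem_sup_right (MC.smul_mem b hvC))),
    hΛx, lie_add_add_smul_add_smul]

theorem lie_eq_zero_of_forall_killingForm_eq_zero (hss : (killingForm ℝ 𝔤).SeparatingLeft)
    (h𝔨𝔥 : 𝔨 ≤ 𝔥) (hMF𝔥 : MF ≤ 𝔥.toSubmodule) (h𝔤 : 𝔨.toSubmodule ⊔ (MF ⊔ MC) = ⊤)
    (hMForth : ∀ x ∈ 𝔨, ∀ y ∈ MF, killingForm ℝ 𝔤 x y = 0)
    (hMCsum : 𝔥.toSubmodule ⊔ MC = ⊤)
    (hMCorth : ∀ x ∈ 𝔥, ∀ y ∈ MC, killingForm ℝ 𝔤 x y = 0)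
    {Z vF vC : 𝔤} (hZ : Z ∈ 𝔨) (hvF : vF ∈ MF) (hvC : vC ∈ MC)
    (hW : ∀ Y ∈ MF ⊔ MC, killingForm ℝ 𝔤 Y (⁅Z, vF⁆ + ⁅(2 : ℝ) • Z + vF, vC⁆) = 0) :
    ⁅Z, vF⁆ = 0 ∧ ⁅(2 : ℝ) • Z + vF, vC⁆ = 0 := by
  have hsymm := LieModule.traceForm_comm ℝ 𝔤 𝔤
  have hrefl : (killingForm ℝ 𝔤).IsRefl := (LieModule.traceForm_isSymm ℝ 𝔤 𝔤).isRefl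
  have hMC := orthogonal_eq_of_sup_eq_top hss hrefl hMCsum hMCorth
  have hu : ⁅Z, vF⁆ ∈ 𝔥.toSubmodule := 𝔥.lie_mem (h𝔨𝔥 hZ) (hMF𝔥 hvF)
  have hw : ⁅(2 : ℝ) • Z + vF, vC⁆ ∈ MC := hMC ▸ lie_mem_orthogonal
    (LieModule.traceForm_lieInvariant ℝ 𝔤 𝔤) (add_mem (𝔥.smul_mem 2 (h𝔨𝔥 hZ)) (hMF𝔥 hvF))
    (hMC ▸ hvC)
  have h𝔨 : ∀ k ∈ 𝔨, killingForm ℝ 𝔤 (⁅Z, vF⁆ + ⁅(2 : ℝ) • Z + vF, vC⁆) k = 0 := by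
    intro k hk
    rw [map_add, LinearMap.add_apply, LieModule.traceForm_apply_lie_apply', hsymm vF,
      hMForth _ (𝔨.lie_mem hZ hk) vF hvF, hsymm, hMCorth k (h𝔨𝔥 hk) _ hw, neg_zero, add_zero]
  have hsum := eq_zero_of_sup_eq_top hss h𝔤 h𝔨 fun Y hY ↦ hsymm Y _ ▸ hW Y hY
  exact Submodule.disjoint_iff_add_eq_zero.mp
    (isCompl_of_sup_eq_top hss hrefl hMCsum hMCorth).disjoint hu hw hsum

end KillingForm

theorem gordon_tamaru_criterion_general
    {𝔤 : Type*} [LieRing 𝔤] [LieAlgebra ℝ 𝔤]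
    -- `G` connected semisimple: the Killing form of `𝔤` is nondegenerate
    (hss : (killingForm ℝ 𝔤).Nondegenerate)
    -- `K ⊂ H` are compact subgroups of `G`
    (𝔨 𝔥 : LieSubalgebra ℝ 𝔤) (h𝔨𝔥 : 𝔨 ≤ 𝔥)
    -- `M_F` is the `B`-orthogonal complement of `𝔨` in `𝔥`
    (MF : Submodule ℝ 𝔤) (hMF𝔥 : MF ≤ 𝔥.toSubmodule)
    (hMFsum : 𝔨.toSubmodule ⊔ MF = 𝔥.toSubmodule)
    (hMForth : ∀ x ∈ 𝔨, ∀ y ∈ MF, killingForm ℝ 𝔤 x y = 0)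
    -- `M_C` is the `B`-orthogonal complement of `𝔥` in `𝔤`
    (MC : Submodule ℝ 𝔤)
    (hMCsum : 𝔥.toSubmodule ⊔ MC = ⊤)
    (hMCorth : ∀ x ∈ 𝔥, ∀ y ∈ MC, killingForm ℝ 𝔤 x y = 0)
    -- `p` is the projection onto the tangent space `𝔪 = M_F ⊕ M_C` of `G/K` along `𝔨`
    (p : 𝔤 →ₗ[ℝ] 𝔤)
    (hp𝔪 : ∀ x ∈ MF ⊔ MC, p x = x) (hp𝔨 : ∀ x ∈ 𝔨, p x = 0) :
    -- the metrics `g_{a,b} = a B|_{M_F} + b B|_{M_C}`, `a, b ∈ ℝ⁺`, are g.o. metrics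
    (∀ a b : ℝ, 0 < a → 0 < b → ∀ Λ : 𝔤 →ₗ[ℝ] 𝔤,
        (∀ x ∈ MF, Λ x = a • x) → (∀ x ∈ MC, Λ x = b • x) →
        IsGOMetric 𝔨 (MF ⊔ MC) p Λ) ↔
      ∀ vF ∈ MF, ∀ vC ∈ MC, ∃ X ∈ 𝔨, ⁅X, vF⁆ = (0 : 𝔤) ∧ ⁅X + vF, vC⁆ = (0 : 𝔤) := by
  have h𝔤 : 𝔨.toSubmodule ⊔ (MF ⊔ MC) = ⊤ := by rw [← sup_assoc, hMFsum, hMCsum]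
  constructor
  · intro hGO vF hvF vC hvC
    by_cases hx : vF + vC = 0
    · refine ⟨0, 𝔨.zero_mem, zero_lie vF, ?_⟩
      rw [zero_add, eq_neg_of_add_eq_zero_right hx, lie_neg, lie_self, neg_zero]
    obtain ⟨Λ, hΛ𝔥, hΛC⟩ := Submodule.exists_linearMap_eq_smul_of_isCompl
      (isCompl_of_sup_eq_top hss.1 (LieModule.traceForm_isSymm ℝ 𝔤 𝔤).isRefl hMCsum hMCorth)
      (1 : ℝ) 2
    have hΛF : ∀ x ∈ MF, Λ x = (1 : ℝ) • x := fun x hx ↦ hΛ𝔥 x (hMF𝔥 hx)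
    obtain ⟨Z, hZ, hZgeo⟩ := hGO 1 2 one_pos two_pos Λ hΛF hΛC _
      (add_mem (Submodule.mem_sup_left hvF) (Submodule.mem_sup_right hvC)) hx
    rw [isGeodesicVector_add_add_iff h𝔨𝔥 hMF𝔥 h𝔤 hMForth hMCorth hp𝔨 hp𝔪 hΛF hΛC hZ hvF hvC]
      at hZgeo
    simp only [one_smul, show (2 : ℝ) - 1 = 1 by norm_num] at hZgeo
    obtain ⟨hZvF, hZvC⟩ := lie_eq_zero_of_forall_killingForm_eq_zero hss.1 h𝔨𝔥 hMF𝔥 h𝔤 hMForth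
      hMCsum hMCorth hZ hvF hvC hZgeo
    exact ⟨(2 : ℝ) • Z, 𝔨.smul_mem 2 hZ, by rw [smul_lie, hZvF, smul_zero], hZvC⟩
  · intro hcrit a b _ hb Λ hΛF hΛC x hx _
    obtain ⟨vF, hvF, vC, hvC, rfl⟩ := Submodule.mem_sup.mp hx
    obtain ⟨X, hX, hXvF, hXvC⟩ := hcrit vF hvF vC hvC
    refine ⟨((b - a) / b) • X, 𝔨.smul_mem _ hX, (isGeodesicVector_add_add_iff h𝔨𝔥 hMF𝔥 h𝔤
      hMForth hMCorth hp𝔨 hp𝔪 hΛF hΛC (𝔨.smul_mem _ hX) hvF hvC).mpr fun Y _ ↦ ?_⟩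
    -- `b Z + (b - a) v_F = (b - a) (X + v_F)`
    rw [smul_smul, mul_div_cancel₀ _ hb.ne', ← smul_add, smul_lie, smul_lie, hXvF, hXvC]
    simp

/-- **Proposition (Gordon; Tamaru)**.
Let `G` be a connected semisimple Lie group and `K ⊂ H` compact subgroups, with
`M_F` and `M_C` the tangent spaces of `F = H/K` and `C = G/H`.  The metric
`g_{a,b} = a B|_{M_F} + b B|_{M_C}` (`a, b ∈ ℝ⁺`) is a g.o. metric on `G/K` if and only
if for every `v_F ∈ M_F`, `v_C ∈ M_C` there is `X ∈ 𝔨` with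
`[X, v_F] = 0` and `[X + v_F, v_C] = 0`. -/
theorem gordon_tamaru_criterion
    {𝔤 : Type*} [LieRing 𝔤] [LieAlgebra ℝ 𝔤] [FiniteDimensional ℝ 𝔤]
    -- `G` connected semisimple: the Killing form of `𝔤` is nondegenerate
    (hss : (killingForm ℝ 𝔤).Nondegenerate)
    -- `K ⊂ H` are compact subgroups of `G`
    (𝔨 𝔥 : LieSubalgebra ℝ 𝔤) (h𝔨𝔥 : 𝔨 ≤ 𝔥)
    (hcpt : ∀ x : 𝔤, x ∈ 𝔥 → x ≠ 0 → killingForm ℝ 𝔤 x x < 0)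
    -- `M_F` is the `B`-orthogonal complement of `𝔨` in `𝔥`
    (MF : Submodule ℝ 𝔤) (hMF𝔥 : MF ≤ 𝔥.toSubmodule)
    (hMFsum : 𝔨.toSubmodule ⊔ MF = 𝔥.toSubmodule) (hMFdisj : Disjoint 𝔨.toSubmodule MF)
    (hMForth : ∀ x ∈ 𝔨, ∀ y ∈ MF, killingForm ℝ 𝔤 x y = 0)
    -- `M_C` is the `B`-orthogonal complement of `𝔥` in `𝔤`
    (MC : Submodule ℝ 𝔤)
    (hMCsum : 𝔥.toSubmodule ⊔ MC = ⊤) (hMCdisj : Disjoint 𝔥.toSubmodule MC)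
    (hMCorth : ∀ x ∈ 𝔥, ∀ y ∈ MC, killingForm ℝ 𝔤 x y = 0)
    -- `p` is the projection onto the tangent space `𝔪 = M_F ⊕ M_C` of `G/K` along `𝔨`
    (p : 𝔤 →ₗ[ℝ] 𝔤)
    (hp𝔪 : ∀ x ∈ MF ⊔ MC, p x = x) (hp𝔨 : ∀ x ∈ 𝔨, p x = 0)
    (hpr : ∀ x : 𝔤, p x ∈ MF ⊔ MC) :
    -- the metrics `g_{a,b} = a B|_{M_F} + b B|_{M_C}`, `a, b ∈ ℝ⁺`, are g.o. metrics
    (∀ a b : ℝ, 0 < a → 0 < b → ∀ Λ : 𝔤 →ₗ[ℝ] 𝔤,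
        (∀ x ∈ MF, Λ x = a • x) → (∀ x ∈ MC, Λ x = b • x) →
        IsGOMetric 𝔨 (MF ⊔ MC) p Λ) ↔
      ∀ vF ∈ MF, ∀ vC ∈ MC, ∃ X ∈ 𝔨, ⁅X, vF⁆ = (0 : 𝔤) ∧ ⁅X + vF, vC⁆ = (0 : 𝔤) :=
  gordon_tamaru_criterion_general hss 𝔨 𝔥 h𝔨𝔥 MF hMF𝔥 hMFsum hMForth MC hMCsum hMCorth p hp𝔪 hp𝔨
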